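/- The Q_2-Margolis homology of B₂ is T_2(ζ_1, ζ_2, …): the subspace of B₂ spanned by monomials ζ_1^{e_1} ζ_2^{e_2} ⋯ ζ_r^{e_r} in which e_k < p² for every k ≥ 1 lies in ker(Q_2), meets im(Q_2) only in 0, and maps isomorphically onto ker(Q_2)/im(Q_2). -/

import Mathlib

/-- A monomial of `B n = F_p[ζ₁, ζ₂, …] ⊗ Λ(τ̄_{n+1}, τ̄_{n+2}, …)`:
`e k` is the exponent of `ζ_k` (with `e 0 = 0`, i.e. no `ζ₀`), and
`t` is the set of indices `m` of the exterior generators `τ̄_m` occurring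
(all of which satisfy `m ≥ n + 1`). -/
structure Mono (n : ℕ) where
  e : ℕ →₀ ℕ
  t : Finset ℕ
  he : e 0 = 0
  ht : ∀ m ∈ t, n + 1 ≤ m

/-- `B p n` models `A//E(n)_* = F_p[ζ₁, ζ₂, …] ⊗ Λ(τ̄_{n+1}, …)` as the free
`F_p`-vector space on its monomial basis. -/
abbrev B (p n : ℕ) : Type := Mono n →₀ ZMod p

namespace Mono

variable {n : ℕ}

/-- Internal (topological) degree of a monomial: `deg ζ_k = 2(p^k − 1)`,
`deg τ̄_m = 2p^m − 1`. -/
def deg (p : ℕ) (x : Mono n) : ℕ :=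
  x.e.sum (fun k a => a * (2 * (p ^ k - 1))) + ∑ m ∈ x.t, (2 * p ^ m - 1)

/-- Weight of a monomial: `wt ζ_k = wt τ̄_k = p^k`, extended additively. -/
def wt (p : ℕ) (x : Mono n) : ℕ :=
  x.e.sum (fun k a => a * p ^ k) + ∑ m ∈ x.t, p ^ m

/-- Length of a monomial: the number of exterior factors `τ̄_m` occurring in it. -/
def len (x : Mono n) : ℕ := x.t.card

end Mono

/-- The monomial obtained from `x` by the Milnor operation `Q_r` acting on the
exterior factor `τ̄_m`: remove `τ̄_m` and multiply by `ζ_{m−r}^{p^r}`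
(with the convention `ζ₀ = 1`, i.e. if `m ≤ r` nothing is added). -/
noncomputable def Qtarget (p r : ℕ) {n : ℕ} (x : Mono n) (m : ℕ) : Mono n where
  e := if r < m then x.e + Finsupp.single (m - r) (p ^ r) else x.e
  t := x.t.erase m
  he := by
    by_cases h : r < m
    · simp [if_pos h, Finsupp.single_apply, x.he, Nat.sub_ne_zero_of_lt h]
    · simp [if_neg h, x.he]
  ht := fun m' hm' => x.ht m' (Finset.mem_of_mem_erase hm')

/-- Value of the Milnor operation `Q_r` on a basis monomial: the signed sum over the
exterior factors `τ̄_m` of `x`, the sign being the Koszul sign `(−1)^{#{m' ∈ t, m' < m}}`. -/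
noncomputable def Qmono (p r : ℕ) {n : ℕ} (x : Mono n) : B p n :=
  ∑ m ∈ x.t, ((-1 : ZMod p) ^ ((x.t.filter (fun m' => m' < m)).card)) •
    Finsupp.single (Qtarget p r x m) (1 : ZMod p)

/-- The Milnor operation `Q_r : B_n → B_n`, the unique graded derivation with
`Q_r ζ_k = 0` and `Q_r τ̄_m = ζ_{m−r}^{p^r}`. -/
noncomputable def Qop (p n r : ℕ) : B p n →ₗ[ZMod p] B p n :=
  Finsupp.lsum (ZMod p) fun x => LinearMap.toSpanSingleton (ZMod p) (B p n) (Qmono p r x)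

/-- The span of the set of monomials satisfying a predicate `P`. -/
noncomputable def monSpan (p n : ℕ) (P : Mono n → Prop) : Submodule (ZMod p) (B p n) :=
  Submodule.span (ZMod p) ((fun x => Finsupp.single x (1 : ZMod p)) '' {x | P x})

/-!
`B_n` is the tensor product over `j ≥ 1` of the complexes `F_p[ζ_j] ⊗ Λ(τ̄_{j+n})` with
`Q_n τ̄_{j+n} = ζ_j^{p^n}`, and each factor has homology `T_n(ζ_j)`. Globally: call `j` bad
for a monomial `x` if `ζ_j^{p^n} ∣ x` or `τ̄_{j+n} ∣ x`. The monomials without bad index are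
exactly those of `T_n(ζ₁, ζ₂, …)`; on the others, trading `ζ_j^{p^n}` for `τ̄_{j+n}` at the
first bad index `j` (and sending `x` to `0` if `τ̄_{j+n}` is already there) is a contracting
homotopy `H`, i.e. `Q_n H + H Q_n = id`. Since `Q_n` only produces monomials with a bad index,
this identifies the homology.
-/

theorem Finsupp.range_le_of_forall_single_one_mem {α R M : Type*} [Semiring R]
    [AddCommMonoid M] [Module R M] (f : (α →₀ R) →ₗ[R] M) {S : Submodule R M}
    (h : ∀ a, f (Finsupp.single a 1) ∈ S) : LinearMap.range f ≤ S := by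
  rintro _ ⟨v, rfl⟩
  induction v using Finsupp.induction_linear with
  | zero => rw [map_zero]; exact S.zero_mem
  | add v w hv hw => rw [map_add]; exact S.add_mem hv hw
  | single a b => rw [← Finsupp.smul_single_one, map_smul]; exact S.smul_mem b (h a)

namespace Mono

variable {p n : ℕ}

@[ext]
theorem ext {x y : Mono n} (he : x.e = y.e) (ht : x.t = y.t) : x = y := by
  cases x; cases y; cases he; cases ht; rfl

variable (p) in
def Reduced (x : Mono n) : Prop :=
  x.t = ∅ ∧ ∀ k, 1 ≤ k → x.e k < p ^ n

variable (p) in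
def IsBadAt (x : Mono n) (j : ℕ) : Prop :=
  1 ≤ j ∧ (p ^ n ≤ x.e j ∨ j + n ∈ x.t)

variable (p) in
def IsFirstBadAt (x : Mono n) (j : ℕ) : Prop :=
  x.IsBadAt p j ∧ ∀ i < j, ¬ x.IsBadAt p i

theorem isBadAt_sub_of_mem {x : Mono n} {m : ℕ} (hm : m ∈ x.t) : x.IsBadAt p (m - n) := by
  have := x.ht m hm
  exact ⟨by omega, Or.inr (by rwa [Nat.sub_add_cancel (by omega)])⟩

theorem reduced_iff_forall_not_isBadAt {x : Mono n} : x.Reduced p ↔ ∀ j, ¬ x.IsBadAt p j := by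
  constructor
  · rintro ⟨ht, he⟩ j ⟨hj, hbad | hbad⟩
    · exact (he j hj).not_ge hbad
    · simp [ht] at hbad
  · intro h
    refine ⟨Finset.eq_empty_of_forall_notMem fun m hm => h _ (isBadAt_sub_of_mem hm),
      fun k hk => not_le.mp fun hle => h k ⟨hk, Or.inl hle⟩⟩

theorem exists_isFirstBadAt {x : Mono n} (hx : ¬ x.Reduced p) : ∃ j, x.IsFirstBadAt p j := by
  classical
  have h : ∃ j, x.IsBadAt p j := by simpa [reduced_iff_forall_not_isBadAt] using hx
  exact ⟨Nat.find h, Nat.find_spec h, fun i => Nat.find_min h⟩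

theorem IsFirstBadAt.le_of_mem {x : Mono n} {j m : ℕ} (hx : x.IsFirstBadAt p j)
    (hm : m ∈ x.t) : j + n ≤ m := by
  have := x.ht m hm
  by_contra hlt
  exact hx.2 (m - n) (by omega) (isBadAt_sub_of_mem hm)

theorem IsFirstBadAt.filter_lt_eq_empty {x : Mono n} {j : ℕ} (hx : x.IsFirstBadAt p j) :
    x.t.filter (· < j + n) = ∅ :=
  Finset.filter_eq_empty_iff.mpr fun _ hm => not_lt.mpr (hx.le_of_mem hm)

end Mono

open Mono

variable {p n : ℕ}

theorem Qtarget_e {x : Mono n} {m : ℕ} (hm : m ∈ x.t) :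
    (Qtarget p n x m).e = x.e + Finsupp.single (m - n) (p ^ n) := by
  simp [Qtarget, if_pos (show n < m from x.ht m hm)]

theorem Qtarget_not_reduced {x : Mono n} {m : ℕ} (hm : m ∈ x.t) :
    ¬ (Qtarget p n x m).Reduced p := by
  rw [reduced_iff_forall_not_isBadAt, not_forall_not]
  have := x.ht m hm
  refine ⟨m - n, by omega, Or.inl ?_⟩
  simp [Qtarget_e hm]

theorem Mono.IsFirstBadAt.Qtarget_of_mem {x : Mono n} {j m : ℕ} (hx : x.IsFirstBadAt p j)
    (hm : m ∈ x.t) : (Qtarget p n x m).IsFirstBadAt p j := by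
  have hjm := hx.le_of_mem hm
  have he : ∀ i < j, (Qtarget p n x m).e i = x.e i := fun i hi => by
    simp [Qtarget_e hm, show m - n ≠ i by omega]
  refine ⟨⟨hx.1.1, ?_⟩, fun i hi ⟨hi1, hbad⟩ => hx.2 i hi ⟨hi1, ?_⟩⟩
  · rcases eq_or_ne m (j + n) with rfl | hne
    · left; simp [Qtarget_e hm]
    · refine hx.1.2.imp (fun h => ?_) (fun h => Finset.mem_erase.mpr ⟨hne.symm, h⟩)
      simp only [Qtarget_e hm, Finsupp.add_apply]
      omega
  · exact hbad.imp (fun h => he i hi ▸ h) Finset.mem_of_mem_erase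

variable (p) in
/-- `ζ_j^{-p^n} τ̄_{j+n} · x`; the subtraction of exponents truncates, so this is only meaningful
when `ζ_j^{p^n} ∣ x`. -/
noncomputable def Htarget (x : Mono n) (j : ℕ) (hj : 1 ≤ j) : Mono n where
  e := x.e - Finsupp.single j (p ^ n)
  t := insert (j + n) x.t
  he := by simp [x.he]
  ht m hm := by
    rcases Finset.mem_insert.mp hm with h | h
    · omega
    · exact x.ht m h

theorem Htarget_t (x : Mono n) {j : ℕ} (hj : 1 ≤ j) :
    (Htarget p x j hj).t = insert (j + n) x.t := rfl

theorem Htarget_Qtarget_self {x : Mono n} {j : ℕ} (hj : 1 ≤ j) (hmem : j + n ∈ x.t) :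
    Htarget p (Qtarget p n x (j + n)) j hj = x := by
  ext1
  · simp [Htarget, Qtarget_e hmem]
  · exact Finset.insert_erase hmem

theorem Qtarget_Htarget_self {x : Mono n} {j : ℕ} (hj : 1 ≤ j) (he : p ^ n ≤ x.e j)
    (hmem : j + n ∉ x.t) : Qtarget p n (Htarget p x j hj) (j + n) = x := by
  ext1
  · ext k
    rw [Qtarget_e (Finset.mem_insert_self _ _)]
    by_cases hk : j = k
    · subst hk
      simp only [Htarget, add_tsub_cancel_right, Finsupp.add_apply, Finsupp.tsub_apply,
        Finsupp.single_eq_same]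
      omega
    · simp [Htarget, hk]
  · exact Finset.erase_insert hmem

theorem Qtarget_Htarget_comm {x : Mono n} {j m : ℕ} (hj : 1 ≤ j) (hm : m ∈ x.t)
    (hne : m ≠ j + n) :
    Qtarget p n (Htarget p x j hj) m = Htarget p (Qtarget p n x m) j hj := by
  have hmj : m - n ≠ j := by have := x.ht m hm; omega
  ext1
  · ext k
    rw [Qtarget_e (Finset.mem_insert_of_mem hm)]
    simp only [Htarget, Qtarget_e hm, Finsupp.add_apply, Finsupp.tsub_apply,
      Finsupp.single_apply]
    split_ifs <;> omega
  · exact Finset.erase_insert_of_ne hne.symm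

open Classical in
variable (p) in
noncomputable def Hmono (x : Mono n) : B p n :=
  if h : ∃ j, x.IsBadAt p j then
    if Nat.find h + n ∈ x.t then 0
    else Finsupp.single (Htarget p x (Nat.find h) (Nat.find_spec h).1) 1
  else 0

variable (p n) in
noncomputable def Hop : B p n →ₗ[ZMod p] B p n :=
  Finsupp.lsum (ZMod p) fun x => LinearMap.toSpanSingleton (ZMod p) (B p n) (Hmono p x)

theorem Qop_single (r : ℕ) (x : Mono n) : Qop p n r (Finsupp.single x 1) = Qmono p r x := by
  simp [Qop]

theorem Hop_single (x : Mono n) : Hop p n (Finsupp.single x 1) = Hmono p x := by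
  simp [Hop]

theorem Qmono_of_reduced {r : ℕ} {x : Mono n} (hx : x.Reduced p) : Qmono p r x = 0 := by
  simp [Qmono, hx.1]

theorem Hmono_of_reduced {x : Mono n} (hx : x.Reduced p) : Hmono p x = 0 := by
  rw [reduced_iff_forall_not_isBadAt] at hx
  simp [Hmono, hx]

theorem Mono.IsFirstBadAt.Hmono_of_mem {x : Mono n} {j : ℕ} (hx : x.IsFirstBadAt p j)
    (hmem : j + n ∈ x.t) : Hmono p x = 0 := by
  classical
  have h : ∃ i, x.IsBadAt p i := ⟨j, hx.1⟩
  obtain rfl : Nat.find h = j := (Nat.find_eq_iff h).mpr hx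
  rw [Hmono, dif_pos h, if_pos hmem]

theorem Mono.IsFirstBadAt.Hmono_of_notMem {x : Mono n} {j : ℕ} (hx : x.IsFirstBadAt p j)
    (hmem : j + n ∉ x.t) : Hmono p x = Finsupp.single (Htarget p x j hx.1.1) 1 := by
  classical
  have h : ∃ i, x.IsBadAt p i := ⟨j, hx.1⟩
  obtain rfl : Nat.find h = j := (Nat.find_eq_iff h).mpr hx
  rw [Hmono, dif_pos h, if_neg hmem]

theorem Mono.IsFirstBadAt.Hop_Qmono_of_mem {x : Mono n} {j : ℕ} (hx : x.IsFirstBadAt p j)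
    (hmem : j + n ∈ x.t) : Hop p n (Qmono p n x) = Finsupp.single x 1 := by
  rw [Qmono, map_sum, Finset.sum_eq_single_of_mem (j + n) hmem]
  · have hnotMem : j + n ∉ (Qtarget p n x (j + n)).t := Finset.notMem_erase _ _
    rw [hx.filter_lt_eq_empty, Finset.card_empty, pow_zero, one_smul, Hop_single,
      (hx.Qtarget_of_mem hmem).Hmono_of_notMem hnotMem, Htarget_Qtarget_self _ hmem]
  · intro m hm hne
    have hmem' : j + n ∈ (Qtarget p n x m).t := Finset.mem_erase.mpr ⟨hne.symm, hmem⟩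
    rw [map_smul, Hop_single, (hx.Qtarget_of_mem hm).Hmono_of_mem hmem', smul_zero]

theorem Mono.IsFirstBadAt.Qmono_Htarget_add_Hop_Qmono {x : Mono n} {j : ℕ}
    (hx : x.IsFirstBadAt p j) (hmem : j + n ∉ x.t) :
    Qmono p n (Htarget p x j hx.1.1) + Hop p n (Qmono p n x) = Finsupp.single x 1 := by
  have he : p ^ n ≤ x.e j := hx.1.2.resolve_right hmem
  rw [Qmono, Htarget_t, Finset.sum_insert hmem, Finset.filter_insert, if_neg (lt_irrefl _),
    hx.filter_lt_eq_empty, Finset.card_empty, pow_zero, one_smul, Qtarget_Htarget_self _ he hmem,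
    add_assoc, add_eq_left, Qmono, map_sum, ← Finset.sum_add_distrib]
  refine Finset.sum_eq_zero fun m hm => ?_
  have hlt : j + n < m := (hx.le_of_mem hm).lt_of_ne fun h => hmem (h ▸ hm)
  have hnotMem : j + n ∉ (Qtarget p n x m).t := fun h => hmem (Finset.mem_of_mem_erase h)
  -- `τ̄_{j+n}` now stands in front of `τ̄_m`, flipping the Koszul sign
  have hsign : ((insert (j + n) x.t).filter (· < m)).card = (x.t.filter (· < m)).card + 1 := by
    rw [Finset.filter_insert, if_pos hlt, Finset.card_insert_of_notMem
      fun h => hmem (Finset.mem_of_mem_filter _ h)]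
  rw [hsign, map_smul, Hop_single, (hx.Qtarget_of_mem hm).Hmono_of_notMem hnotMem,
    Qtarget_Htarget_comm _ hm hlt.ne', pow_succ, mul_neg_one, neg_smul, neg_add_cancel]

theorem Qop_Hmono_add_Hop_Qmono {x : Mono n} (hx : ¬ x.Reduced p) :
    Qop p n n (Hmono p x) + Hop p n (Qmono p n x) = Finsupp.single x 1 := by
  obtain ⟨j, hj⟩ := exists_isFirstBadAt hx
  by_cases hmem : j + n ∈ x.t
  · rw [hj.Hmono_of_mem hmem, map_zero, zero_add, hj.Hop_Qmono_of_mem hmem]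
  · rw [hj.Hmono_of_notMem hmem, Qop_single, hj.Qmono_Htarget_add_Hop_Qmono hmem]

theorem monSpan_eq_supported (P : Mono n → Prop) :
    monSpan p n P = Finsupp.supported (ZMod p) (ZMod p) {x | P x} :=
  (Finsupp.supported_eq_span_single _ _).symm

theorem sub_Qop_Hop_sub_Hop_Qop_mem (v : B p n) :
    v - Qop p n n (Hop p n v) - Hop p n (Qop p n n v) ∈ monSpan p n (Reduced p) := by
  refine Finsupp.range_le_of_forall_single_one_mem
    (LinearMap.id - Qop p n n ∘ₗ Hop p n - Hop p n ∘ₗ Qop p n n) (fun x => ?_) ⟨v, rfl⟩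
  simp only [LinearMap.sub_apply, LinearMap.id_apply, LinearMap.comp_apply, Hop_single,
    Qop_single]
  by_cases hx : x.Reduced p
  · rw [Hmono_of_reduced hx, Qmono_of_reduced hx, map_zero, map_zero, sub_zero, sub_zero]
    exact Submodule.subset_span ⟨x, hx, rfl⟩
  · rw [sub_sub, Qop_Hmono_add_Hop_Qmono hx, sub_self]
    exact Submodule.zero_mem _

theorem range_Qop_le_supported_not_reduced :
    LinearMap.range (Qop p n n) ≤ Finsupp.supported (ZMod p) (ZMod p) {x | ¬ x.Reduced p} :=
  Finsupp.range_le_of_forall_single_one_mem _ fun x => by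
    rw [Qop_single, Qmono]
    exact Submodule.sum_mem _ fun m hm =>
      Submodule.smul_mem _ _ (Finsupp.single_mem_supported _ _ (Qtarget_not_reduced hm))

theorem monSpan_reduced_le_ker : monSpan p n (Reduced p) ≤ LinearMap.ker (Qop p n n) := by
  rw [monSpan, Submodule.span_le]
  rintro _ ⟨x, hx, rfl⟩
  rw [SetLike.mem_coe, LinearMap.mem_ker, Qop_single]
  exact Qmono_of_reduced hx

theorem monSpan_reduced_inf_range_eq_bot :
    monSpan p n (Reduced p) ⊓ LinearMap.range (Qop p n n) = ⊥ := by
  rw [← disjoint_iff, monSpan_eq_supported]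
  exact (Finsupp.disjoint_supported_supported disjoint_compl_right).mono_right
    range_Qop_le_supported_not_reduced

theorem ker_le_monSpan_reduced_sup_range :
    LinearMap.ker (Qop p n n) ≤ monSpan p n (Reduced p) ⊔ LinearMap.range (Qop p n n) := by
  intro v hv
  have hv' : v = (v - Qop p n n (Hop p n v) - Hop p n (Qop p n n v)) + Qop p n n (Hop p n v) := by
    rw [LinearMap.mem_ker.mp hv, map_zero, sub_zero, sub_add_cancel]
  rw [hv']
  exact Submodule.add_mem_sup (sub_Qop_Hop_sub_Hop_Qop_mem v) ⟨Hop p n v, rfl⟩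

theorem margolis_Q2_of_B2_general (p : ℕ) :
    monSpan p 2 (fun x => x.t = ∅ ∧ ∀ k, 1 ≤ k → x.e k < p ^ 2) ≤
        LinearMap.ker (Qop p 2 2) ∧
    monSpan p 2 (fun x => x.t = ∅ ∧ ∀ k, 1 ≤ k → x.e k < p ^ 2) ⊓
        LinearMap.range (Qop p 2 2) = ⊥ ∧
    LinearMap.ker (Qop p 2 2) ≤
      monSpan p 2 (fun x => x.t = ∅ ∧ ∀ k, 1 ≤ k → x.e k < p ^ 2) ⊔
        LinearMap.range (Qop p 2 2) :=
  ⟨monSpan_reduced_le_ker, monSpan_reduced_inf_range_eq_bot, ker_le_monSpan_reduced_sup_range⟩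

/-- The `Q₂`-Margolis homology of `B₂` is `T₂(ζ₁, ζ₂, …)`:
the subspace spanned by the monomials `ζ₁^{e₁} ζ₂^{e₂} ⋯` with `e_k < p²` for all `k ≥ 1`
(and no exterior factors) lies in `ker Q₂`, meets `im Q₂` only in `0`, and maps
isomorphically onto `ker Q₂ / im Q₂`. -/
theorem margolis_Q2_of_B2 (p : ℕ) (hp : p.Prime) (hodd : Odd p) :
    monSpan p 2 (fun x => x.t = ∅ ∧ ∀ k, 1 ≤ k → x.e k < p ^ 2) ≤
        LinearMap.ker (Qop p 2 2) ∧
    monSpan p 2 (fun x => x.t = ∅ ∧ ∀ k, 1 ≤ k → x.e k < p ^ 2) ⊓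
        LinearMap.range (Qop p 2 2) = ⊥ ∧
    LinearMap.ker (Qop p 2 2) ≤
      monSpan p 2 (fun x => x.t = ∅ ∧ ∀ k, 1 ≤ k → x.e k < p ^ 2) ⊔
        LinearMap.range (Qop p 2 2) :=
  margolis_Q2_of_B2_general p
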